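/- arXiv:2504.01677 — 4 statements merged into one kernel-verified Lean document; each statement's English description precedes it below -/
import Mathlib

section
/- Suppose Φ_x, Φ_u, φ_x, φ_u satisfy (I - ZA)Φ_x - ZB·Φ_u = I and (I - ZA)φ_x - ZB·φ_u = Z·s, with Φ_x invertible. Define K = Φ_u·Φ_x^{-1} and u_s = φ_u - Φ_u·Φ_x^{-1}·φ_x. Then Φ_x·Z(B·u_s + s) = φ_x, i.e., the affine state response defined by this controller equals φ_x. -/
/-!
Writing `K = Φu Φx⁻¹`, the first constraint multiplied on the right by `Φx⁻¹` says that
`Φx⁻¹ = 1 - Z (A + B K)`: `Φx` is the closed-loop state response of the feedback `u = K x`.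
Substituting the second constraint for `Z s` then gives `Z (B u_s + s) = Φx⁻¹ φx`.
-/

namespace Matrix

variable {ι κ R : Type*} [Fintype ι] [DecidableEq ι] [Fintype κ] [CommRing R]
  {Z A Φx : Matrix ι ι R} {B : Matrix ι κ R} {Φu : Matrix κ ι R}

theorem sls_nonsing_inv_eq (hΦx : IsUnit Φx) (hsub : (1 - Z * A) * Φx - Z * B * Φu = 1) :
    Φx⁻¹ = 1 - Z * (A + B * (Φu * Φx⁻¹)) := by
  have hinv : Φx * Φx⁻¹ = 1 := Φx.mul_nonsing_inv (Φx.isUnit_iff_isUnit_det.mp hΦx)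
  calc Φx⁻¹ = ((1 - Z * A) * Φx - Z * B * Φu) * Φx⁻¹ := by rw [hsub, Matrix.one_mul]
    _ = 1 - Z * (A + B * (Φu * Φx⁻¹)) := by
      simp only [Matrix.sub_mul, Matrix.mul_assoc, hinv, Matrix.mul_one, Matrix.mul_add]
      abel

theorem sls_affine_input_response (hΦx : IsUnit Φx)
    (hsub : (1 - Z * A) * Φx - Z * B * Φu = 1) {φx s : ι → R} {φu : κ → R}
    (hsubaff : (1 - Z * A) *ᵥ φx - (Z * B) *ᵥ φu = Z *ᵥ s) :
    Z *ᵥ (B *ᵥ (φu - (Φu * Φx⁻¹) *ᵥ φx) + s) = Φx⁻¹ *ᵥ φx := by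
  conv_rhs => rw [sls_nonsing_inv_eq hΦx hsub]
  rw [mulVec_add, ← hsubaff]
  simp only [mulVec_sub, sub_mulVec, add_mulVec, mulVec_mulVec, Matrix.mul_add]
  abel

end Matrix

/-- If the affine SLS constraints hold and Φ_x is invertible, then
with K = Φ_u·Φ_x⁻¹ and u_s = φ_u - Φ_u·Φ_x⁻¹·φ_x, the affine state response
Φ_x·Z(B·u_s + s) equals φ_x. -/
theorem affine_sls_state_response_achieved (n m T : ℕ)
    (Z A : Matrix (Fin (T + 1) × Fin n) (Fin (T + 1) × Fin n) ℝ)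
    (B : Matrix (Fin (T + 1) × Fin n) (Fin (T + 1) × Fin m) ℝ)
    (Φx : Matrix (Fin (T + 1) × Fin n) (Fin (T + 1) × Fin n) ℝ)
    (Φu : Matrix (Fin (T + 1) × Fin m) (Fin (T + 1) × Fin n) ℝ)
    (φx s : Fin (T + 1) × Fin n → ℝ) (φu : Fin (T + 1) × Fin m → ℝ)
    (hΦx : IsUnit Φx)
    (hsub : (1 - Z * A) * Φx - Z * B * Φu = 1)
    (hsubaff : (1 - Z * A).mulVec φx - (Z * B).mulVec φu = Z.mulVec s) :
    let us := φu - (Φu * Φx⁻¹).mulVec φx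
    Φx.mulVec (Z.mulVec (B.mulVec us + s)) = φx := by
  intro us
  rw [Matrix.sls_affine_input_response hΦx hsub hsubaff, Matrix.mulVec_mulVec,
    Matrix.mul_nonsing_inv _ (Φx.isUnit_iff_isUnit_det.mp hΦx), Matrix.one_mulVec]
end

section
/- Conversely to the parameterization: for any matrices Φ_x, Φ_u with Φ_x block lower-triangular with identity diagonal blocks satisfying (I - ZA)Φ_x - ZB·Φ_u = I, and any vectors φ_x, φ_u satisfying (I - ZA)φ_x - ZB·φ_u = Z·s, the trajectories defined by x⃗ = Φ_x·w⃗ + φ_x and u⃗ = Φ_u·w⃗ + φ_u satisfy the stacked dynamics x⃗ = ZA·x⃗ + ZB·u⃗ + Z·s⃗ + w⃗ for every disturbance vector w⃗. -/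
/-- Conversely, any Φ_x (block lower-triangular with identity
diagonal blocks), Φ_u, φ_x, φ_u satisfying the affine SLS subspace constraints
define, via x⃗ = Φ_x·w⃗ + φ_x and u⃗ = Φ_u·w⃗ + φ_u, trajectories satisfying the
stacked dynamics x⃗ = ZA·x⃗ + ZB·u⃗ + Z·s⃗ + w⃗ for every disturbance w⃗. -/
theorem affine_sls_realizes_dynamics (n m T : ℕ)
    (Z A : Matrix (Fin (T + 1) × Fin n) (Fin (T + 1) × Fin n) ℝ)
    (B : Matrix (Fin (T + 1) × Fin n) (Fin (T + 1) × Fin m) ℝ)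
    (Φx : Matrix (Fin (T + 1) × Fin n) (Fin (T + 1) × Fin n) ℝ)
    (Φu : Matrix (Fin (T + 1) × Fin m) (Fin (T + 1) × Fin n) ℝ)
    (φx svec : Fin (T + 1) × Fin n → ℝ) (φu : Fin (T + 1) × Fin m → ℝ)
    (hlow : ∀ (i j : Fin (T + 1)) (a b : Fin n), i < j → Φx (i, a) (j, b) = 0)
    (hdiag : ∀ (i : Fin (T + 1)) (a b : Fin n), Φx (i, a) (i, b) = if a = b then 1 else 0)
    (hsub : (1 - Z * A) * Φx - Z * B * Φu = 1)
    (hsubaff : (1 - Z * A).mulVec φx - (Z * B).mulVec φu = Z.mulVec svec) :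
    ∀ w : Fin (T + 1) × Fin n → ℝ,
      Φx.mulVec w + φx =
        (Z * A).mulVec (Φx.mulVec w + φx) + (Z * B).mulVec (Φu.mulVec w + φu)
          + Z.mulVec svec + w := by
  intro w
  have h1 : ((1 - Z * A) * Φx - Z * B * Φu).mulVec w = w := by
    rw [hsub, Matrix.one_mulVec]
  rw [Matrix.sub_mulVec, ← Matrix.mulVec_mulVec, ← Matrix.mulVec_mulVec,
    Matrix.sub_mulVec, Matrix.one_mulVec] at h1
  rw [Matrix.sub_mulVec] at hsubaff
  rw [Matrix.mulVec_add, Matrix.mulVec_add]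
  rw [Matrix.one_mulVec] at hsubaff
  have := congrArg₂ (· + ·) h1 hsubaff
  funext i
  have h := congrFun this i
  simp only [Pi.add_apply, Pi.sub_apply] at h ⊢
  linarith
end

section
/- Let (ũ, x̃) be a trajectory of a time-invariant affine system x(t+1) = Ax(t) + Bu(t) + s of length L. Suppose G ∈ R^{(L-T) x n} satisfies H_1(x̃)·G = I_n and 1^T·G = 1_n^T (each column sums to 1), and ĝ ∈ R^{L-T} satisfies H_1(x̃)·ĝ = 0 and 1^T·ĝ = 1. Define [Φ̄_x; Φ̄_u] = [H_{T+1}(x̃); H_{T+1}(ũ)]·[G - ĝ·1_n^T , ĝ]. Then the resulting blocks satisfy the noiseless affine SLS constraint: (I - ZA_s)Φ_x{0} - ZB_s·Φ_u{0} has first n columns equal to [I_n; 0] and the last column pair satisfies (I - ZA_s)φ_x - ZB_s·φ_u = (0, s, s, ..., s) stacked. -/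
private lemma my_sum_ite {α : Type*} [Fintype α] (c : Prop) [Decidable c] (f : α → ℝ) :
    ∑ x : α, (if c then f x else 0) = if c then ∑ x, f x else 0 := by
  split_ifs <;> simp

private lemma shift_sum {T : ℕ} (p1 : Fin (T + 1)) (g : Fin (T + 1) → ℝ) :
    ∑ q1 : Fin (T + 1), (if (p1 : ℕ) = (q1 : ℕ) + 1 then g q1 else 0) =
      if h : 0 < (p1 : ℕ) then g ⟨(p1 : ℕ) - 1, by omega⟩ else 0 := by
  split_ifs with h
  · rw [Finset.sum_eq_single (⟨(p1 : ℕ) - 1, by omega⟩ : Fin (T + 1))]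
    · rw [if_pos]; simp; omega
    · intro b _ hb
      rw [if_neg]
      intro hc
      exact hb (Fin.ext (by simp; omega))
    · simp
  · apply Finset.sum_eq_zero
    intro q1 _
    rw [if_neg]
    omega

private lemma Z_mul_blk {T n ν : ℕ} (C : Matrix (Fin n) (Fin ν) ℝ)
    (Zm : Matrix (Fin (T + 1) × Fin n) (Fin (T + 1) × Fin n) ℝ)
    (Ms : Matrix (Fin (T + 1) × Fin n) (Fin (T + 1) × Fin ν) ℝ)
    (hZ : ∀ p q, Zm p q = if (p.1 : ℕ) = (q.1 : ℕ) + 1 ∧ p.2 = q.2 then 1 else 0)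
    (hM : ∀ p q, Ms p q = if p.1 = q.1 ∧ (p.1 : ℕ) < T then C p.2 q.2 else 0)
    (p : Fin (T + 1) × Fin n) (q : Fin (T + 1) × Fin ν) :
    (Zm * Ms) p q = if (p.1 : ℕ) = (q.1 : ℕ) + 1 then C p.2 q.2 else 0 := by
  rw [Matrix.mul_apply]
  simp_rw [hZ, hM]
  by_cases hc : (p.1 : ℕ) = (q.1 : ℕ) + 1
  · rw [if_pos hc, Finset.sum_eq_single ((q.1, p.2) : Fin (T + 1) × Fin n)]
    · rw [if_pos ⟨hc, rfl⟩, if_pos ⟨rfl, show ((q.1 : ℕ) < T) by have := p.1.isLt; omega⟩,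
        one_mul]
    · intro b _ hb
      by_cases hz : (p.1 : ℕ) = (b.1 : ℕ) + 1 ∧ p.2 = b.2
      · exfalso
        apply hb
        obtain ⟨hz1, hz2⟩ := hz
        exact Prod.ext (Fin.ext (show (b.1 : ℕ) = (q.1 : ℕ) by omega)) hz2.symm
      · rw [if_neg hz, zero_mul]
    · simp
  · rw [if_neg hc]
    apply Finset.sum_eq_zero
    intro b _
    by_cases hz : (p.1 : ℕ) = (b.1 : ℕ) + 1 ∧ p.2 = b.2
    · rw [if_pos hz, one_mul, if_neg]
      rintro ⟨h1, h2⟩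
      have : (b.1 : ℕ) = (q.1 : ℕ) := congrArg Fin.val h1
      omega
    · rw [if_neg hz, zero_mul]

private lemma key_step {n m L : ℕ} (T : ℕ) (hL : T < L)
    (A : Matrix (Fin n) (Fin n) ℝ) (B : Matrix (Fin n) (Fin m) ℝ) (s : Fin n → ℝ)
    (xt : ℕ → Fin n → ℝ) (ut : ℕ → Fin m → ℝ)
    (htraj : ∀ t, t + 1 ≤ L - 1 → xt (t + 1) = A.mulVec (xt t) + B.mulVec (ut t) + s)
    (c : Fin (L - T) → ℝ) (k : ℕ) (hk : k < T) (b : Fin n) :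
    ∑ j : Fin (L - T), xt (k + 1 + (j : ℕ)) b * c j
      - ∑ q : Fin n, A b q * ∑ j : Fin (L - T), xt (k + (j : ℕ)) q * c j
      - ∑ q : Fin m, B b q * ∑ j : Fin (L - T), ut (k + (j : ℕ)) q * c j
    = s b * ∑ j, c j := by
  have e1 : ∑ q : Fin n, A b q * ∑ j : Fin (L - T), xt (k + (j : ℕ)) q * c j
      = ∑ j : Fin (L - T), (∑ q : Fin n, A b q * xt (k + (j : ℕ)) q) * c j := by
    simp_rw [Finset.mul_sum, Finset.sum_mul, mul_assoc]
    exact Finset.sum_comm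
  have e2 : ∑ q : Fin m, B b q * ∑ j : Fin (L - T), ut (k + (j : ℕ)) q * c j
      = ∑ j : Fin (L - T), (∑ q : Fin m, B b q * ut (k + (j : ℕ)) q) * c j := by
    simp_rw [Finset.mul_sum, Finset.sum_mul, mul_assoc]
    exact Finset.sum_comm
  rw [e1, e2, ← Finset.sum_sub_distrib, ← Finset.sum_sub_distrib, Finset.mul_sum]
  apply Finset.sum_congr rfl
  intro j _
  have ht := htraj (k + (j : ℕ)) (by have := j.isLt; omega)
  have hb := congrFun ht b
  simp only [Pi.add_apply, Matrix.mulVec, dotProduct] at hb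
  have hidx : k + 1 + (j : ℕ) = (k + (j : ℕ)) + 1 := by omega
  rw [hidx, hb]
  ring

/-- data-driven construction of noiseless affine SLS responses.
With H_1(x̃)·G = I, 1ᵀG = 1ᵀ, H_1(x̃)·ghat = 0, 1ᵀghat = 1, the matrices
[Φ̄_x; Φ̄_u] = [H_{T+1}(x̃); H_{T+1}(ũ)]·[G - ghat·1ᵀ, ghat] satisfy the noiseless
affine SLS constraints. -/
theorem data_driven_affine_sls (n m T L : ℕ) (hL : T < L)
    (A : Matrix (Fin n) (Fin n) ℝ) (B : Matrix (Fin n) (Fin m) ℝ) (s : Fin n → ℝ)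
    (xt : ℕ → Fin n → ℝ) (ut : ℕ → Fin m → ℝ)
    (htraj : ∀ t, t + 1 ≤ L - 1 →
      xt (t + 1) = A.mulVec (xt t) + B.mulVec (ut t) + s)
    (G : Matrix (Fin (L - T)) (Fin n) ℝ) (ghat : Fin (L - T) → ℝ)
    (hG1 : Matrix.of (fun (a : Fin n) (j : Fin (L - T)) => xt (j : ℕ) a) * G = 1)
    (hGsum : ∀ a : Fin n, ∑ j, G j a = 1)
    (hghat1 : ∀ a : Fin n, ∑ j : Fin (L - T), xt (j : ℕ) a * ghat j = 0)
    (hghatsum : ∑ j, ghat j = 1) :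
    let Z : Matrix (Fin (T + 1) × Fin n) (Fin (T + 1) × Fin n) ℝ :=
      fun p q => if (p.1 : ℕ) = (q.1 : ℕ) + 1 ∧ p.2 = q.2 then 1 else 0
    let As : Matrix (Fin (T + 1) × Fin n) (Fin (T + 1) × Fin n) ℝ :=
      fun p q => if p.1 = q.1 ∧ (p.1 : ℕ) < T then A p.2 q.2 else 0
    let Bs : Matrix (Fin (T + 1) × Fin n) (Fin (T + 1) × Fin m) ℝ :=
      fun p q => if p.1 = q.1 ∧ (p.1 : ℕ) < T then B p.2 q.2 else 0
    let Hx : Matrix (Fin (T + 1) × Fin n) (Fin (L - T)) ℝ :=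
      fun p j => xt ((p.1 : ℕ) + (j : ℕ)) p.2
    let Hu : Matrix (Fin (T + 1) × Fin m) (Fin (L - T)) ℝ :=
      fun p j => ut ((p.1 : ℕ) + (j : ℕ)) p.2
    let Gshift : Matrix (Fin (L - T)) (Fin n) ℝ := fun j a => G j a - ghat j
    let Φx0 := Hx * Gshift
    let Φu0 := Hu * Gshift
    let φx := Hx.mulVec ghat
    let φu := Hu.mulVec ghat
    ((1 - Z * As) * Φx0 - Z * Bs * Φu0 =
        fun p a => if (p.1 : ℕ) = 0 ∧ p.2 = a then 1 else 0) ∧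
    ((1 - Z * As).mulVec φx - (Z * Bs).mulVec φu =
        fun p => if (p.1 : ℕ) = 0 then 0 else s p.2) := by
  intro Z As Bs Hx Hu Gshift Φx0 Φu0 φx φu
  have hZA : ∀ p q, (Z * As) p q = if (p.1 : ℕ) = (q.1 : ℕ) + 1 then A p.2 q.2 else 0 :=
    Z_mul_blk A Z As (fun _ _ => rfl) (fun _ _ => rfl)
  have hZB : ∀ p q, (Z * Bs) p q = if (p.1 : ℕ) = (q.1 : ℕ) + 1 then B p.2 q.2 else 0 :=
    Z_mul_blk B Z Bs (fun _ _ => rfl) (fun _ _ => rfl)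
  have hcolA : ∀ (p : Fin (T+1) × Fin n) (f : Fin (T+1) × Fin n → ℝ),
      ∑ q, (Z * As) p q * f q =
        if h : 0 < (p.1 : ℕ) then ∑ q2, A p.2 q2 * f (⟨(p.1 : ℕ) - 1, by omega⟩, q2) else 0 := by
    intro p f
    simp_rw [hZA, ite_mul, zero_mul]
    rw [Fintype.sum_prod_type]
    simp_rw [my_sum_ite]
    exact shift_sum p.1 _
  have hcolB : ∀ (p : Fin (T+1) × Fin n) (f : Fin (T+1) × Fin m → ℝ),
      ∑ q, (Z * Bs) p q * f q =
        if h : 0 < (p.1 : ℕ) then ∑ q2, B p.2 q2 * f (⟨(p.1 : ℕ) - 1, by omega⟩, q2) else 0 := by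
    intro p f
    simp_rw [hZB, ite_mul, zero_mul]
    rw [Fintype.sum_prod_type]
    simp_rw [my_sum_ite]
    exact shift_sum p.1 _
  have hΦx : ∀ (q : Fin (T+1) × Fin n) (a : Fin n),
      Φx0 q a = ∑ j : Fin (L - T), xt ((q.1 : ℕ) + (j : ℕ)) q.2 * Gshift j a :=
    fun q a => Matrix.mul_apply
  have hΦu : ∀ (q : Fin (T+1) × Fin m) (a : Fin n),
      Φu0 q a = ∑ j : Fin (L - T), ut ((q.1 : ℕ) + (j : ℕ)) q.2 * Gshift j a :=
    fun q a => Matrix.mul_apply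
  have hφx : ∀ (q : Fin (T+1) × Fin n),
      φx q = ∑ j : Fin (L - T), xt ((q.1 : ℕ) + (j : ℕ)) q.2 * ghat j := fun q => rfl
  have hφu : ∀ (q : Fin (T+1) × Fin m),
      φu q = ∑ j : Fin (L - T), ut ((q.1 : ℕ) + (j : ℕ)) q.2 * ghat j := fun q => rfl
  have hGshift0 : ∀ a : Fin n, ∑ j, Gshift j a = 0 := by
    intro a
    show ∑ j : Fin (L - T), (G j a - ghat j) = 0
    rw [Finset.sum_sub_distrib, hGsum a, hghatsum, sub_self]
  constructor
  · ext p a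
    show ((1 - Z * As) * Φx0 : Matrix (Fin (T+1) × Fin n) (Fin n) ℝ) p a
      - (Z * Bs * Φu0 : Matrix (Fin (T+1) × Fin n) (Fin n) ℝ) p a = _
    rw [Matrix.sub_mul, Matrix.one_mul, Matrix.sub_apply,
      Matrix.mul_apply (M := Z * As), Matrix.mul_apply (M := Z * Bs)]
    rw [hcolA p (fun q => Φx0 q a), hcolB p (fun q => Φu0 q a)]
    rcases Nat.eq_zero_or_pos (p.1 : ℕ) with h0 | h0
    · rw [dif_neg (by omega), dif_neg (by omega), sub_zero, sub_zero]
      have h1 := congrFun (congrFun hG1 p.2) a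
      rw [Matrix.mul_apply] at h1
      simp only [Matrix.of_apply] at h1
      rw [hΦx p a]
      simp only [h0, Nat.zero_add]
      show ∑ j : Fin (L - T), xt (j : ℕ) p.2 * (G j a - ghat j) = _
      simp_rw [mul_sub]
      rw [Finset.sum_sub_distrib, hghat1 p.2, sub_zero, h1, Matrix.one_apply]
      simp [h0]
    · rw [dif_pos h0, dif_pos h0, if_neg (by omega)]
      simp_rw [hΦx, hΦu]
      have hp : ∀ j : Fin (L - T), (p.1 : ℕ) + (j : ℕ) = ((p.1 : ℕ) - 1) + 1 + (j : ℕ) := by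
        intro j; omega
      simp_rw [hp]
      rw [key_step T hL A B s xt ut htraj (fun j => Gshift j a) ((p.1 : ℕ) - 1)
        (by have := p.1.isLt; omega) p.2, hGshift0 a, mul_zero]
  · funext p
    rw [Pi.sub_apply, Matrix.sub_mulVec, Matrix.one_mulVec, Pi.sub_apply]
    rw [show (Z * As).mulVec φx p = ∑ q, (Z * As) p q * φx q from rfl,
      show (Z * Bs).mulVec φu p = ∑ q, (Z * Bs) p q * φu q from rfl]
    rw [hcolA p (fun q => φx q), hcolB p (fun q => φu q)]
    rcases Nat.eq_zero_or_pos (p.1 : ℕ) with h0 | h0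
    · rw [dif_neg (by omega), dif_neg (by omega), sub_zero, sub_zero, if_pos h0]
      rw [hφx p]
      simp only [h0, Nat.zero_add]
      exact hghat1 p.2
    · rw [dif_pos h0, dif_pos h0, if_neg (by omega)]
      simp_rw [hφx, hφu]
      have hp : ∀ j : Fin (L - T), (p.1 : ℕ) + (j : ℕ) = ((p.1 : ℕ) - 1) + 1 + (j : ℕ) := by
        intro j; omega
      simp_rw [hp]
      rw [key_step T hL A B s xt ut htraj ghat ((p.1 : ℕ) - 1)
        (by have := p.1.isLt; omega) p.2, hghatsum, mul_one]
end

section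
/- In the noiseless setting (w(t) = 0 for all t, initial condition x_0 given), if Φ_x{0}, Φ_u{0}, φ_x, φ_u satisfy (I - ZA_s)Φ_x{0} - ZB_s·Φ_u{0} = [I_n; 0] and (I - ZA_s)φ_x - ZB_s·φ_u = Z·s⃗, then for every x_0 ∈ R^n the sequences x⃗ = Φ_x{0}·x_0 + φ_x and u⃗ = Φ_u{0}·x_0 + φ_u satisfy x(0) = x_0 and x(t+1) = A x(t) + B u(t) + s for all t ∈ {0,...,T-1}, where x(t), u(t) are the t-th blocks of x⃗, u⃗. -/
private lemma sls_aux {T n n' : ℕ} (M : Matrix (Fin n) (Fin n') ℝ)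
    (p : Fin (T + 1) × Fin n) (q : Fin (T + 1) × Fin n') :
    (∑ x : Fin (T + 1), ∑ c : Fin n,
      (if (p.1 : ℕ) = (x : ℕ) + 1 ∧ p.2 = c then (1:ℝ) else 0) *
      (if x = q.1 ∧ (x : ℕ) < T then M c q.2 else 0)) =
    (if (p.1 : ℕ) = (q.1 : ℕ) + 1 ∧ (q.1 : ℕ) < T then M p.2 q.2 else 0) := by
  have h : ∀ (x : Fin (T + 1)) (c : Fin n),
      (if (p.1 : ℕ) = (x : ℕ) + 1 ∧ p.2 = c then (1:ℝ) else 0) *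
      (if x = q.1 ∧ (x : ℕ) < T then M c q.2 else 0) =
      if x = q.1 then (if c = p.2 then
        (if (p.1 : ℕ) = (q.1 : ℕ) + 1 ∧ (q.1 : ℕ) < T then M p.2 q.2 else 0) else 0)
      else 0 := by
    intro x c
    split_ifs <;> simp_all
  simp [h, Finset.sum_ite_eq']

/-- in the noiseless setting, responses satisfying the noiseless
affine SLS constraints generate, for every initial condition x₀, trajectories
x⃗ = Φ_x{0}·x₀ + φ_x, u⃗ = Φ_u{0}·x₀ + φ_u satisfying x(0) = x₀ and the affine
dynamics x(t+1) = A x(t) + B u(t) + s. -/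
theorem noiseless_affine_sls_generates_trajectories (n m T : ℕ)
    (A : Matrix (Fin n) (Fin n) ℝ) (B : Matrix (Fin n) (Fin m) ℝ) (s : Fin n → ℝ)
    (Z As : Matrix (Fin (T + 1) × Fin n) (Fin (T + 1) × Fin n) ℝ)
    (Bs : Matrix (Fin (T + 1) × Fin n) (Fin (T + 1) × Fin m) ℝ)
    (Φx0 : Matrix (Fin (T + 1) × Fin n) (Fin n) ℝ)
    (Φu0 : Matrix (Fin (T + 1) × Fin m) (Fin n) ℝ)
    (φx : Fin (T + 1) × Fin n → ℝ) (φu : Fin (T + 1) × Fin m → ℝ)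
    (hZ : Z = fun p q => if (p.1 : ℕ) = (q.1 : ℕ) + 1 ∧ p.2 = q.2 then 1 else 0)
    (hAs : As = fun p q => if p.1 = q.1 ∧ (p.1 : ℕ) < T then A p.2 q.2 else 0)
    (hBs : Bs = fun p q => if p.1 = q.1 ∧ (p.1 : ℕ) < T then B p.2 q.2 else 0)
    (hsub : (1 - Z * As) * Φx0 - Z * Bs * Φu0 =
      fun p a => if (p.1 : ℕ) = 0 ∧ p.2 = a then 1 else 0)
    (hsubaff : (1 - Z * As).mulVec φx - (Z * Bs).mulVec φu =
      Z.mulVec (fun p => if (p.1 : ℕ) < T then s p.2 else 0)) :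
    ∀ x0 : Fin n → ℝ,
      let xvec := Φx0.mulVec x0 + φx
      let uvec := Φu0.mulVec x0 + φu
      (∀ a : Fin n, xvec (⟨0, Nat.succ_pos T⟩, a) = x0 a) ∧
      (∀ t : ℕ, ∀ ht : t < T, ∀ a : Fin n,
        xvec (⟨t + 1, by omega⟩, a) =
          (∑ b, A a b * xvec (⟨t, by omega⟩, b)) +
          (∑ b, B a b * uvec (⟨t, by omega⟩, b)) + s a) := by
  intro x0 xvec uvec
  set svec : Fin (T + 1) × Fin n → ℝ :=
    fun p => if (p.1 : ℕ) < T then s p.2 else 0 with hsvec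
  have hZA : Z * As = fun p q =>
      if (p.1 : ℕ) = (q.1 : ℕ) + 1 ∧ (q.1 : ℕ) < T then A p.2 q.2 else 0 := by
    ext p q
    rw [Matrix.mul_apply]
    simp only [Matrix.mul_apply, hZ, hAs, Fintype.sum_prod_type]
    exact sls_aux A p q
  have hZB : Z * Bs = fun p q =>
      if (p.1 : ℕ) = (q.1 : ℕ) + 1 ∧ (q.1 : ℕ) < T then B p.2 q.2 else 0 := by
    ext p q
    rw [Matrix.mul_apply]
    simp only [Matrix.mul_apply, hZ, hBs, Fintype.sum_prod_type]
    exact sls_aux B p q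
  -- key vector identity
  have hkey : ∀ p, xvec p - (Z * As).mulVec xvec p - (Z * Bs).mulVec uvec p =
      (if (p.1 : ℕ) = 0 then x0 p.2 else 0) + Z.mulVec svec p := by
    have hmat : xvec - (Z * As).mulVec xvec - (Z * Bs).mulVec uvec =
        ((1 - Z * As) * Φx0 - Z * Bs * Φu0).mulVec x0 +
        ((1 - Z * As).mulVec φx - (Z * Bs).mulVec φu) := by
      show (Φx0.mulVec x0 + φx) - (Z * As).mulVec (Φx0.mulVec x0 + φx)
          - (Z * Bs).mulVec (Φu0.mulVec x0 + φu) = _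
      simp only [Matrix.mulVec_add, Matrix.mulVec_mulVec, Matrix.sub_mulVec,
        Matrix.one_mulVec, Matrix.sub_mul, Matrix.one_mul, Matrix.mul_assoc]
      funext p
      simp only [Pi.add_apply, Pi.sub_apply]
      ring
    intro p
    have h1 := congrFun hmat p
    rw [show ((1 - Z * As) * Φx0 - Z * Bs * Φu0 : Matrix _ _ ℝ) =
      fun p a => if (p.1 : ℕ) = 0 ∧ p.2 = a then 1 else 0 from hsub, hsubaff] at h1
    have he : Matrix.mulVec (fun p a => if (p.1 : ℕ) = 0 ∧ p.2 = a then (1:ℝ) else 0)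
        x0 p = if (p.1 : ℕ) = 0 then x0 p.2 else 0 := by
      simp only [Matrix.mulVec, dotProduct]
      have h : ∀ a : Fin n, (if (p.1 : ℕ) = 0 ∧ p.2 = a then (1:ℝ) else 0) * x0 a =
          if p.2 = a then (if (p.1 : ℕ) = 0 then x0 a else 0) else 0 := by
        intro a; split_ifs <;> simp_all
      simp only [h, Finset.sum_ite_eq, Finset.mem_univ, if_true]
    simp only [Pi.sub_apply] at h1
    rw [h1, Pi.add_apply, he]
  refine ⟨?_, ?_⟩
  · intro a
    have h := hkey (⟨0, Nat.succ_pos T⟩, a)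
    have hZAv : (Z * As).mulVec xvec (⟨0, Nat.succ_pos T⟩, a) = 0 := by
      simp only [Matrix.mulVec, dotProduct, hZA]
      apply Finset.sum_eq_zero
      intro q _
      have hc : ¬(((⟨0, Nat.succ_pos T⟩ : Fin (T + 1)) : ℕ) = (q.1 : ℕ) + 1 ∧
          (q.1 : ℕ) < T) := by
        rintro ⟨h1, -⟩
        have h1' : (0 : ℕ) = (q.1 : ℕ) + 1 := h1
        omega
      rw [if_neg hc, zero_mul]
    have hZBv : (Z * Bs).mulVec uvec (⟨0, Nat.succ_pos T⟩, a) = 0 := by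
      simp only [Matrix.mulVec, dotProduct, hZB]
      apply Finset.sum_eq_zero
      intro q _
      have hc : ¬(((⟨0, Nat.succ_pos T⟩ : Fin (T + 1)) : ℕ) = (q.1 : ℕ) + 1 ∧
          (q.1 : ℕ) < T) := by
        rintro ⟨h1, -⟩
        have h1' : (0 : ℕ) = (q.1 : ℕ) + 1 := h1
        omega
      rw [if_neg hc, zero_mul]
    have hZv : Z.mulVec svec (⟨0, Nat.succ_pos T⟩, a) = 0 := by
      simp only [Matrix.mulVec, dotProduct, hZ]
      apply Finset.sum_eq_zero
      intro q _
      have hc : ¬(((⟨0, Nat.succ_pos T⟩ : Fin (T + 1)) : ℕ) = (q.1 : ℕ) + 1 ∧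
          a = q.2) := by
        rintro ⟨h1, -⟩
        have h1' : (0 : ℕ) = (q.1 : ℕ) + 1 := h1
        omega
      rw [if_neg hc, zero_mul]
    rw [hZAv, hZBv, hZv, if_pos rfl] at h
    linarith [h]
  · intro t ht a
    have h := hkey (⟨t + 1, by omega⟩, a)
    have hZAv : (Z * As).mulVec xvec (⟨t + 1, by omega⟩, a) =
        ∑ b, A a b * xvec (⟨t, by omega⟩, b) := by
      simp only [Matrix.mulVec, dotProduct, hZA, Fintype.sum_prod_type]
      have h2 : ∀ (k : Fin (T + 1)) (c : Fin n),
          (if ((⟨t + 1, by omega⟩ : Fin (T + 1)) : ℕ) = (k : ℕ) + 1 ∧ (k : ℕ) < T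
            then A a c else 0) * xvec (k, c) =
          if k = (⟨t, by omega⟩ : Fin (T + 1)) then
            A a c * xvec ((⟨t, by omega⟩ : Fin (T + 1)), c) else 0 := by
        intro k c
        by_cases hk : k = (⟨t, by omega⟩ : Fin (T + 1))
        · subst hk
          rw [if_pos ⟨rfl, ht⟩, if_pos rfl]
        · have hc : ¬(((⟨t + 1, by omega⟩ : Fin (T + 1)) : ℕ) = (k : ℕ) + 1 ∧
              (k : ℕ) < T) := by
            rintro ⟨h1, -⟩
            have h1' : t + 1 = (k : ℕ) + 1 := h1
            have hkt : (k : ℕ) = t := by omega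
            exact hk (Fin.ext hkt)
          rw [if_neg hc, if_neg hk, zero_mul]
      simp only [h2]
      rw [Finset.sum_comm]
      simp only [Finset.sum_ite_eq', Finset.mem_univ, if_true]
    have hZBv : (Z * Bs).mulVec uvec (⟨t + 1, by omega⟩, a) =
        ∑ b, B a b * uvec (⟨t, by omega⟩, b) := by
      simp only [Matrix.mulVec, dotProduct, hZB, Fintype.sum_prod_type]
      have h2 : ∀ (k : Fin (T + 1)) (c : Fin m),
          (if ((⟨t + 1, by omega⟩ : Fin (T + 1)) : ℕ) = (k : ℕ) + 1 ∧ (k : ℕ) < T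
            then B a c else 0) * uvec (k, c) =
          if k = (⟨t, by omega⟩ : Fin (T + 1)) then
            B a c * uvec ((⟨t, by omega⟩ : Fin (T + 1)), c) else 0 := by
        intro k c
        by_cases hk : k = (⟨t, by omega⟩ : Fin (T + 1))
        · subst hk
          rw [if_pos ⟨rfl, ht⟩, if_pos rfl]
        · have hc : ¬(((⟨t + 1, by omega⟩ : Fin (T + 1)) : ℕ) = (k : ℕ) + 1 ∧
              (k : ℕ) < T) := by
            rintro ⟨h1, -⟩
            have h1' : t + 1 = (k : ℕ) + 1 := h1
            have hkt : (k : ℕ) = t := by omega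
            exact hk (Fin.ext hkt)
          rw [if_neg hc, if_neg hk, zero_mul]
      simp only [h2]
      rw [Finset.sum_comm]
      simp only [Finset.sum_ite_eq', Finset.mem_univ, if_true]
    have hZv : Z.mulVec svec (⟨t + 1, by omega⟩, a) = s a := by
      simp only [Matrix.mulVec, dotProduct, hZ, Fintype.sum_prod_type]
      have h2 : ∀ (k : Fin (T + 1)) (c : Fin n),
          (if ((⟨t + 1, by omega⟩ : Fin (T + 1)) : ℕ) = (k : ℕ) + 1 ∧ a = c
            then (1:ℝ) else 0) * svec (k, c) =
          if k = (⟨t, by omega⟩ : Fin (T + 1)) then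
            (if c = a then s a else 0) else 0 := by
        intro k c
        by_cases hk : k = (⟨t, by omega⟩ : Fin (T + 1))
        · subst hk
          by_cases hc : c = a
          · subst hc
            rw [if_pos ⟨rfl, rfl⟩, if_pos rfl, if_pos rfl, one_mul, hsvec]
            exact if_pos ht
          · rw [if_neg (fun hh => hc hh.2.symm), if_pos rfl, if_neg hc, zero_mul]
        · have hcc : ¬(((⟨t + 1, by omega⟩ : Fin (T + 1)) : ℕ) = (k : ℕ) + 1 ∧
              a = c) := by
            rintro ⟨h1, -⟩
            have h1' : t + 1 = (k : ℕ) + 1 := h1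
            have hkt : (k : ℕ) = t := by omega
            exact hk (Fin.ext hkt)
          rw [if_neg hcc, if_neg hk, zero_mul]
      simp only [h2]
      rw [Finset.sum_comm]
      simp only [Finset.sum_ite_eq', Finset.mem_univ, if_true]
    have hif : ¬(((⟨t + 1, by omega⟩ : Fin (T + 1)) : ℕ) = 0) := Nat.succ_ne_zero t
    rw [hZAv, hZBv, hZv, if_neg hif] at h
    linarith [h]
end
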